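/- arXiv:2005.08945 — 3 statements merged into one kernel-verified Lean document; each statement's English description precedes it below -/
import Mathlib

section
/- For every q > 0, the q-digamma function ψ_q is strictly increasing on (0,∞) and has a uniquely determined positive zero x_q, and this zero satisfies 1 < x_q < 3/2. -/
open Real
open Set Filter


/-- Key inequality: `0 < 1 - v^2 + 2*(v*log v)` for `v ∈ (0,1)`. -/
lemma key_ineq {v : ℝ} (h0 : 0 < v) (h1 : v < 1) :
    0 < 1 - v ^ 2 + 2 * (v * Real.log v) := by
  set f : ℝ → ℝ := fun w => 1 - w ^ 2 + 2 * (w * Real.log w) with hf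
  have hcont : ContinuousOn f (Icc 0 1) :=
    ((continuous_const.sub (continuous_pow 2)).add
      (continuous_const.mul Real.continuous_mul_log)).continuousOn
  have hderiv : ∀ w ∈ interior (Icc (0:ℝ) 1), deriv f w < 0 := by
    intro w hw
    rw [interior_Icc] at hw
    have hw0 : 0 < w := hw.1
    have hD : HasDerivAt f (-(2 * w ^ 1) + 2 * (Real.log w + 1)) w :=
      ((hasDerivAt_pow 2 w).const_sub 1).add ((Real.hasDerivAt_mul_log hw0.ne').const_mul 2)
    rw [hD.deriv]
    have hlog : Real.log w < w - 1 := Real.log_lt_sub_one_of_pos hw0 hw.2.ne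
    nlinarith
  have hanti : StrictAntiOn f (Icc 0 1) :=
    strictAntiOn_of_deriv_neg (convex_Icc 0 1) hcont hderiv
  have := hanti (Set.mem_Icc.2 ⟨h0.le, h1.le⟩) (Set.mem_Icc.2 ⟨zero_le_one, le_rfl⟩) h1
  simpa [hf] using this

noncomputable def psiLow (q x : ℝ) : ℝ :=
  -Real.log (1 - q) +
    Real.log q * ∑' n : ℕ, q ^ (((n : ℝ) + 1) * x) / (1 - q ^ ((n : ℝ) + 1))

section low
variable {q : ℝ}

lemma term_eq (hq0 : 0 < q) (n : ℕ) (x : ℝ) :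
    q ^ (((n : ℝ) + 1) * x) / (1 - q ^ ((n : ℝ) + 1))
      = (q ^ x) ^ (n + 1) / (1 - q ^ (n + 1)) := by
  have h1 : ((n : ℝ) + 1) = ((n + 1 : ℕ) : ℝ) := by push_cast; ring
  rw [h1, Real.rpow_natCast q (n+1), mul_comm, Real.rpow_mul hq0.le,
    Real.rpow_natCast (q ^ x) (n+1)]

lemma den_pos (hq0 : 0 < q) (hq1 : q < 1) (n : ℕ) : 0 < 1 - q ^ (n + 1) := by
  have : q ^ (n+1) < 1 := pow_lt_one₀ hq0.le hq1 (by omega); linarith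

lemma den_ge (hq0 : 0 < q) (hq1 : q < 1) (n : ℕ) : 1 - q ≤ 1 - q ^ (n + 1) := by
  have h : q ^ (n + 1) ≤ q := by
    calc q ^ (n + 1) = q ^ n * q := pow_succ q n
    _ ≤ 1 * q := mul_le_mul_of_nonneg_right (pow_le_one₀ hq0.le hq1.le) hq0.le
    _ = q := one_mul q
  linarith

lemma summable_aux (hq0 : 0 < q) (hq1 : q < 1) {r : ℝ} (hr0 : 0 ≤ r) (hr1 : r < 1) :
    Summable (fun n : ℕ => r ^ (n + 1) / (1 - q ^ (n + 1))) := by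
  refine Summable.of_nonneg_of_le (fun n => ?_) (fun n => ?_)
    ((summable_geometric_of_lt_one hr0 hr1).div_const (1 - q))
  · have := den_pos hq0 hq1 n; positivity
  · refine div_le_div₀ (by positivity) ?_ (by linarith) (den_ge hq0 hq1 n)
    calc r ^ (n+1) = r ^ n * r := pow_succ r n
    _ ≤ r ^ n * 1 := mul_le_mul_of_nonneg_left hr1.le (pow_nonneg hr0 n)
    _ = r ^ n := mul_one _

lemma tsum_eq (hq0 : 0 < q) (x : ℝ) :
    ∑' n : ℕ, q ^ (((n : ℝ) + 1) * x) / (1 - q ^ ((n : ℝ) + 1))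
      = ∑' n : ℕ, (q ^ x) ^ (n + 1) / (1 - q ^ (n + 1)) :=
  tsum_congr fun n => term_eq hq0 n x

end low

section low2
variable {q : ℝ}

lemma psiLow_strictMono (hq0 : 0 < q) (hq1 : q < 1) :
    StrictMonoOn (psiLow q) (Set.Ioi 0) := by
  intro x hx y hy hxy
  have hlogq : Real.log q < 0 := Real.log_neg hq0 hq1
  have hqx1 : q ^ x < 1 := Real.rpow_lt_one hq0.le hq1 hx
  have hqyx : q ^ y < q ^ x := Real.rpow_lt_rpow_of_exponent_gt hq0 hq1 hxy
  have hqy0 : 0 < q ^ y := Real.rpow_pos_of_pos hq0 y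
  have hqx0 : 0 < q ^ x := Real.rpow_pos_of_pos hq0 x
  have hS : ∑' n : ℕ, (q ^ y) ^ (n + 1) / (1 - q ^ (n + 1))
      < ∑' n : ℕ, (q ^ x) ^ (n + 1) / (1 - q ^ (n + 1)) := by
    refine Summable.tsum_lt_tsum_of_nonneg (fun n => ?_) (fun n => ?_) (i := 0) ?_
      (summable_aux hq0 hq1 hqx0.le hqx1)
    · have := den_pos hq0 hq1 n; positivity
    · have := den_pos hq0 hq1 n
      gcongr
    · have h0 := den_pos hq0 hq1 0
      have : (q ^ y) ^ (0 + 1) < (q ^ x) ^ (0 + 1) := by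
        simpa using hqyx
      exact div_lt_div_of_pos_right this h0
  unfold psiLow
  rw [tsum_eq hq0 x, tsum_eq hq0 y]
  have := mul_lt_mul_of_neg_left hS hlogq
  linarith

lemma psiLow_one_neg (hq0 : 0 < q) (hq1 : q < 1) : psiLow q 1 < 0 := by
  have hlogq : Real.log q < 0 := Real.log_neg hq0 hq1
  have hL : HasSum (fun n : ℕ => q ^ (n + 1) / (n + 1)) (-Real.log (1 - q)) :=
    Real.hasSum_pow_div_log_of_abs_lt_one (by rw [abs_of_pos hq0]; exact hq1)
  have hterm : ∀ n : ℕ, q ^ (n + 1) / ((n : ℝ) + 1)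
      < -Real.log q * (q ^ (n + 1) / (1 - q ^ (n + 1))) := by
    intro n
    have hu0 : 0 < q ^ (n + 1) := by positivity
    have hu1 : q ^ (n + 1) < 1 := pow_lt_one₀ hq0.le hq1 (by omega)
    have hden := den_pos hq0 hq1 n
    have hn1 : (0 : ℝ) < (n : ℝ) + 1 := by positivity
    have hlogu : Real.log (q ^ (n + 1)) = ((n : ℝ) + 1) * Real.log q := by
      rw [Real.log_pow]; push_cast; ring
    have hkey : 1 - q ^ (n + 1) < ((n : ℝ) + 1) * (-Real.log q) := by
      have := Real.log_lt_sub_one_of_pos hu0 hu1.ne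
      rw [hlogu] at this; linarith
    rw [mul_div_assoc'] -- -log q * u / (1 - u)
    rw [div_lt_div_iff₀ hn1 hden]
    nlinarith [mul_lt_mul_of_pos_left hkey hu0]
  have hsum : -Real.log (1 - q)
      < ∑' n : ℕ, -Real.log q * (q ^ (n + 1) / (1 - q ^ (n + 1))) := by
    rw [← hL.tsum_eq]
    refine Summable.tsum_lt_tsum_of_nonneg (fun n => by positivity) (fun n => (hterm n).le)
      (hterm 0) ?_
    exact (summable_aux hq0 hq1 hq0.le hq1).mul_left _
  rw [tsum_mul_left] at hsum
  unfold psiLow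
  rw [tsum_eq hq0 1, Real.rpow_one]
  linarith

lemma psiLow_three_half_pos (hq0 : 0 < q) (hq1 : q < 1) : 0 < psiLow q (3/2) := by
  have hlogq : Real.log q < 0 := Real.log_neg hq0 hq1
  have hL : HasSum (fun n : ℕ => q ^ (n + 1) / (n + 1)) (-Real.log (1 - q)) :=
    Real.hasSum_pow_div_log_of_abs_lt_one (by rw [abs_of_pos hq0]; exact hq1)
  set w : ℝ := q ^ ((1 : ℝ)/2) with hw
  have hw0 : 0 < w := Real.rpow_pos_of_pos hq0 _
  have hw1 : w < 1 := Real.rpow_lt_one hq0.le hq1 (by norm_num)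
  have hwsq : w ^ 2 = q := by
    rw [hw, ← Real.rpow_natCast (q ^ ((1:ℝ)/2)) 2, ← Real.rpow_mul hq0.le]
    norm_num
  have hq32 : q ^ ((3 : ℝ)/2) = q * w := by
    rw [show (3:ℝ)/2 = 1 + 1/2 by norm_num, Real.rpow_add hq0, Real.rpow_one]
  have hterm : ∀ n : ℕ,
      -Real.log q * ((q ^ ((3:ℝ)/2)) ^ (n + 1) / (1 - q ^ (n + 1)))
        < q ^ (n + 1) / ((n : ℝ) + 1) := by
    intro n
    set v : ℝ := w ^ (n + 1) with hv
    have hv0 : 0 < v := by positivity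
    have hv1 : v < 1 := pow_lt_one₀ hw0.le hw1 (by omega)
    have huv : q ^ (n + 1) = v ^ 2 := by
      rw [hv, ← hwsq, ← pow_mul, ← pow_mul, mul_comm]
    have hnum : (q ^ ((3:ℝ)/2)) ^ (n + 1) = q ^ (n + 1) * v := by
      rw [hq32, mul_pow, hv]
    have hu0 : 0 < q ^ (n + 1) := by positivity
    have hden := den_pos hq0 hq1 n
    have hn1 : (0 : ℝ) < (n : ℝ) + 1 := by positivity
    have hlogv : ((n : ℝ) + 1) * Real.log q = 2 * Real.log v := by
      have h1 : Real.log (q ^ (n + 1)) = ((n : ℝ) + 1) * Real.log q := by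
        rw [Real.log_pow]; push_cast; ring
      have h2 : Real.log (v ^ 2) = 2 * Real.log v := by
        rw [Real.log_pow]; push_cast; ring
      rw [← h1, huv, h2]
    have hkey := key_ineq hv0 hv1
    rw [hnum, mul_div_assoc', div_lt_div_iff₀ hden hn1]
    -- goal: -log q * (q^(n+1) * v) * ((n:ℝ)+1) < q^(n+1) * (1 - q^(n+1))
    have hexp : -Real.log q * (q ^ (n + 1) * v) * ((n : ℝ) + 1)
        = q ^ (n + 1) * (-(2 * Real.log v) * v) := by
      have : -Real.log q * ((n : ℝ) + 1) = -(2 * Real.log v) := by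
        rw [← hlogv]; ring
      calc -Real.log q * (q ^ (n + 1) * v) * ((n : ℝ) + 1)
          = (-Real.log q * ((n : ℝ) + 1)) * (q ^ (n + 1) * v) := by ring
        _ = -(2 * Real.log v) * (q ^ (n + 1) * v) := by rw [this]
        _ = q ^ (n + 1) * (-(2 * Real.log v) * v) := by ring
    rw [hexp, huv]
    have h2 : -(2 * Real.log v) * v < 1 - v ^ 2 := by nlinarith
    nlinarith [mul_lt_mul_of_pos_left h2 (show (0:ℝ) < v ^ 2 by positivity)]
  have hq320 : 0 < q ^ ((3:ℝ)/2) := Real.rpow_pos_of_pos hq0 _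
  have hq321 : q ^ ((3:ℝ)/2) < 1 := Real.rpow_lt_one hq0.le hq1 (by norm_num)
  have hsum : ∑' n : ℕ, -Real.log q * ((q ^ ((3:ℝ)/2)) ^ (n + 1) / (1 - q ^ (n + 1)))
      < -Real.log (1 - q) := by
    rw [← hL.tsum_eq]
    refine Summable.tsum_lt_tsum_of_nonneg (fun n => ?_) (fun n => (hterm n).le) (hterm 0)
      hL.summable
    have hden := den_pos hq0 hq1 n
    exact mul_nonneg (neg_nonneg.2 hlogq.le)
      (div_nonneg (pow_nonneg hq320.le _) hden.le)
  rw [tsum_mul_left] at hsum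
  unfold psiLow
  rw [tsum_eq hq0 (3/2)]
  push_cast at hsum ⊢
  linarith

lemma psiLow_contOn (hq0 : 0 < q) (hq1 : q < 1) :
    ContinuousOn (psiLow q) (Set.Icc 1 2) := by
  unfold psiLow
  refine continuousOn_const.add (continuousOn_const.mul ?_)
  refine continuousOn_tsum (fun n => ?_) 
    ((summable_geometric_of_lt_one hq0.le hq1).div_const (1 - q)) (fun n x hx => ?_)
  · have hrw : (fun x : ℝ => q ^ (((n : ℝ) + 1) * x) / (1 - q ^ ((n : ℝ) + 1)))
        = fun x : ℝ => Real.exp (Real.log q * (((n : ℝ) + 1) * x)) / (1 - q ^ ((n : ℝ) + 1)) := by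
      funext x; rw [Real.rpow_def_of_pos hq0]
    rw [hrw]
    exact ((Real.continuous_exp.comp (continuous_const.mul
      (continuous_const.mul continuous_id))).div_const _).continuousOn
  · rw [term_eq hq0 n x]
    have hden := den_pos hq0 hq1 n
    have hqx0 : (0:ℝ) ≤ q ^ x := (Real.rpow_pos_of_pos hq0 x).le
    rw [Real.norm_eq_abs, abs_of_nonneg (div_nonneg (pow_nonneg hqx0 _) (by linarith))]
    have hnum : (q ^ x) ^ (n + 1) ≤ q ^ n := by
      have h1 : (q ^ x) ^ (n + 1) = q ^ (x * ((n:ℝ) + 1)) := by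
        rw [← Real.rpow_natCast (q ^ x) (n+1), ← Real.rpow_mul hq0.le]
        push_cast; ring
      have h2 : q ^ (x * ((n:ℝ) + 1)) ≤ q ^ ((n : ℝ)) := by
        apply Real.rpow_le_rpow_of_exponent_ge hq0 hq1.le
        nlinarith [hx.1, (Nat.cast_nonneg n : (0:ℝ) ≤ n)]
      rw [h1, ← Real.rpow_natCast q n]
      exact h2
    exact div_le_div₀ (pow_nonneg hq0.le n) hnum (by linarith) (den_ge hq0 hq1 n)

end low2


lemma package {f : ℝ → ℝ} (hmono : StrictMonoOn f (Set.Ioi 0)) {c : ℝ}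
    (hc1 : 1 < c) (hc2 : c < 3/2) (hfc : f c = 0) :
    ∃ xq : ℝ, 1 < xq ∧ xq < 3 / 2 ∧ f xq = 0 ∧
      ∀ y : ℝ, 0 < y → f y = 0 → y = xq := by
  refine ⟨c, hc1, hc2, hfc, fun y hy hfy => ?_⟩
  have hc0 : (0:ℝ) < c := lt_trans one_pos hc1
  rcases lt_trichotomy y c with h | h | h
  · have := hmono (Set.mem_Ioi.2 hy) (Set.mem_Ioi.2 hc0) h
    rw [hfy, hfc] at this; exact absurd this (lt_irrefl 0)
  · exact h
  · have := hmono (Set.mem_Ioi.2 hc0) (Set.mem_Ioi.2 hy) h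
    rw [hfy, hfc] at this; exact absurd this (lt_irrefl 0)

lemma find_zero {f : ℝ → ℝ} (hcont : ContinuousOn f (Set.Icc 1 (3/2)))
    (h1 : f 1 < 0) (h2 : 0 < f (3/2)) :
    ∃ c ∈ Set.Ioo (1:ℝ) (3/2), f c = 0 := by
  have := intermediate_value_Ioo (by norm_num : (1:ℝ) ≤ 3/2) hcont
  obtain ⟨c, hc, hfc⟩ := this (Set.mem_Ioo.2 ⟨h1, h2⟩)
  exact ⟨c, hc, hfc⟩

lemma qDigamma_high_eq {q : ℝ} (hq : 1 < q) (x : ℝ) :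
    -Real.log (q - 1) +
      Real.log q *
        (x - 1 / 2 - ∑' n : ℕ, q ^ (-(((n : ℝ) + 1) * x)) / (1 - q ^ (-((n : ℝ) + 1))))
      = psiLow q⁻¹ x + Real.log q * (x - 3/2) := by
  have hq0 : (0:ℝ) < q := lt_trans one_pos hq
  have hterm : ∀ n : ℕ, q ^ (-(((n : ℝ) + 1) * x)) / (1 - q ^ (-((n : ℝ) + 1)))
      = q⁻¹ ^ (((n : ℝ) + 1) * x) / (1 - q⁻¹ ^ ((n : ℝ) + 1)) := by
    intro n
    rw [Real.inv_rpow hq0.le, Real.inv_rpow hq0.le, ← Real.rpow_neg hq0.le,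
      ← Real.rpow_neg hq0.le]
  rw [tsum_congr hterm]
  unfold psiLow
  have hloginv : Real.log q⁻¹ = -Real.log q := Real.log_inv q
  have h1q : 1 - q⁻¹ = (q - 1) * q⁻¹ := by
    field_simp
  have hlog1q : Real.log (1 - q⁻¹) = Real.log (q - 1) - Real.log q := by
    rw [h1q, Real.log_mul (by linarith : q - 1 ≠ 0)
      (inv_ne_zero (by linarith : q ≠ 0)), Real.log_inv]
    ring
  rw [hlog1q, hloginv]
  ring

section gamma

lemma gamma_ne_neg {x : ℝ} (hx : 0 < x) : ∀ m : ℕ, x ≠ -(m:ℝ) := fun m =>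
  ne_of_gt (lt_of_le_of_lt (neg_nonpos.mpr (Nat.cast_nonneg m)) hx)

lemma hasDerivAt_logGamma {x : ℝ} (hx : 0 < x) :
    HasDerivAt (fun y : ℝ => Real.log (Real.Gamma y))
      (deriv Real.Gamma x / Real.Gamma x) x :=
  (Real.differentiableAt_Gamma (gamma_ne_neg hx)).hasDerivAt.log
    (Real.Gamma_pos_of_pos hx).ne'

lemma hasDerivAt_logGamma' {x : ℝ} (hx : 0 < x) :
    HasDerivAt (fun y : ℝ => Real.log (Real.Gamma y))
      (deriv (fun y : ℝ => Real.log (Real.Gamma y)) x) x := by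
  rw [(hasDerivAt_logGamma hx).deriv]; exact hasDerivAt_logGamma hx

lemma logGamma_contOn {a b : ℝ} (ha : 0 < a) :
    ContinuousOn (fun y : ℝ => Real.log (Real.Gamma y)) (Set.Icc a b) :=
  fun x hx => ((hasDerivAt_logGamma (lt_of_lt_of_le ha hx.1)).differentiableAt
    |>.continuousAt).continuousWithinAt

lemma psi_monotoneOn :
    MonotoneOn (deriv (fun y : ℝ => Real.log (Real.Gamma y))) (Set.Ioi 0) := by
  have h := Real.convexOn_log_Gamma.monotoneOn_deriv
    (fun x hx => by
      simpa [Function.comp_def] using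
        (hasDerivAt_logGamma (Set.mem_Ioi.1 hx)).differentiableAt)
  simpa [Function.comp_def] using h

lemma psi_rec {x : ℝ} (hx : 0 < x) :
    deriv (fun y : ℝ => Real.log (Real.Gamma y)) (x + 1)
      = deriv (fun y : ℝ => Real.log (Real.Gamma y)) x + 1/x := by
  have hx1 : (0:ℝ) < x + 1 := by linarith
  have h1 : HasDerivAt (fun y : ℝ => Real.log (Real.Gamma (y + 1)))
      (deriv (fun y : ℝ => Real.log (Real.Gamma y)) (x + 1)) x := by
    have hcomp := (hasDerivAt_logGamma' hx1).comp x ((hasDerivAt_id x).add_const 1)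
    simpa [Function.comp_def] using hcomp
  have h2 : HasDerivAt (fun y : ℝ => Real.log (Real.Gamma (y + 1)))
      (x⁻¹ + deriv (fun y : ℝ => Real.log (Real.Gamma y)) x) x := by
    have hev : (fun y : ℝ => Real.log (Real.Gamma (y + 1)))
        =ᶠ[nhds x] (fun y : ℝ => Real.log y + Real.log (Real.Gamma y)) := by
      filter_upwards [eventually_gt_nhds hx] with y hy
      rw [Real.Gamma_add_one hy.ne', Real.log_mul hy.ne'
        (Real.Gamma_pos_of_pos hy).ne']
    exact ((Real.hasDerivAt_log hx.ne').add (hasDerivAt_logGamma' hx)).congr_of_eventuallyEq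
      hev
  have := h1.unique h2
  rw [this, one_div]; ring

lemma psi_iter (n : ℕ) :
    deriv (fun y : ℝ => Real.log (Real.Gamma y)) (3/2 + n)
      = deriv (fun y : ℝ => Real.log (Real.Gamma y)) (3/2)
        + ∑ k ∈ Finset.range n, 1 / ((k : ℝ) + 3/2) := by
  induction n with
  | zero => simp
  | succ m ih =>
    have hpos : (0:ℝ) < 3/2 + m := by positivity
    have hcast : (3/2 : ℝ) + ((m + 1 : ℕ) : ℝ) = (3/2 + (m:ℝ)) + 1 := by
      push_cast; ring
    rw [hcast, psi_rec hpos, ih, Finset.sum_range_succ]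
    ring

end gamma

section gamma2

lemma harmonic_lt_log :
    ∑ k ∈ Finset.range 32, 1 / ((k : ℝ) + 3/2) < Real.log (65/2) := by
  have hlog2 := Real.log_two_gt_d9
  have h6465 : Real.log (64/65 : ℝ) ≤ 64/65 - 1 :=
    Real.log_le_sub_one_of_pos (by norm_num)
  have hinv : Real.log (65/64 : ℝ) = -Real.log (64/65 : ℝ) := by
    rw [← Real.log_inv]; norm_num
  have h6564 : (1:ℝ)/65 ≤ Real.log (65/64 : ℝ) := by
    rw [hinv]; linarith
  have hsplit : Real.log (65/2 : ℝ) = 5 * Real.log 2 + Real.log (65/64) := by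
    rw [show (65/2 : ℝ) = 2^5 * (65/64) by norm_num,
      Real.log_mul (by norm_num) (by norm_num), Real.log_pow]
    push_cast; ring
  have hsum : ∑ k ∈ Finset.range 32, 1 / ((k : ℝ) + 3/2)
      < 5 * 0.6931471803 + 1/65 := by
    norm_num [Finset.sum_range_succ]
  calc ∑ k ∈ Finset.range 32, 1 / ((k : ℝ) + 3/2)
      < 5 * 0.6931471803 + 1/65 := hsum
    _ ≤ 5 * Real.log 2 + Real.log (65/64) := by nlinarith
    _ = Real.log (65/2) := hsplit.symm

lemma psi_slope_bound :
    Real.log (65/2) ≤ deriv (fun y : ℝ => Real.log (Real.Gamma y)) (67/2) := by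
  obtain ⟨d, hd, hde⟩ := exists_hasDerivAt_eq_slope
    (fun y : ℝ => Real.log (Real.Gamma y))
    (deriv (fun y : ℝ => Real.log (Real.Gamma y)))
    (by norm_num : (65/2 : ℝ) < 67/2)
    (logGamma_contOn (by norm_num))
    (fun x hx => hasDerivAt_logGamma' (by linarith [hx.1] : (0:ℝ) < x))
  have hgamma : Real.Gamma (67/2 : ℝ) = (65/2) * Real.Gamma (65/2) := by
    rw [show (67/2 : ℝ) = 65/2 + 1 by norm_num,
      Real.Gamma_add_one (by norm_num : (65/2:ℝ) ≠ 0)]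
  have hval : deriv (fun y : ℝ => Real.log (Real.Gamma y)) d = Real.log (65/2) := by
    rw [hde, hgamma, Real.log_mul (by norm_num)
      (Real.Gamma_pos_of_pos (by norm_num : (0:ℝ) < 65/2)).ne']
    norm_num
  rw [← hval]
  exact psi_monotoneOn (Set.mem_Ioi.2 (by linarith [hd.1] : (0:ℝ) < d))
    (Set.mem_Ioi.2 (by norm_num)) hd.2.le

lemma psi_three_half_pos :
    0 < deriv (fun y : ℝ => Real.log (Real.Gamma y)) (3/2) := by
  have hiter := psi_iter 32
  have hcast : (3/2 : ℝ) + ((32 : ℕ) : ℝ) = 67/2 := by norm_num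
  rw [hcast] at hiter
  have := psi_slope_bound
  have := harmonic_lt_log
  linarith

lemma psi_strictMono :
    StrictMonoOn (deriv (fun y : ℝ => Real.log (Real.Gamma y))) (Set.Ioi 0) := by
  intro x hx y hy hxy
  rw [Set.mem_Ioi] at hx hy
  rcases eq_or_lt_of_le (psi_monotoneOn (Set.mem_Ioi.2 hx) (Set.mem_Ioi.2 hy) hxy.le)
    with heq | h
  · exfalso
    have h3 := psi_monotoneOn (Set.mem_Ioi.2 (by linarith : (0:ℝ) < x + 1))
      (Set.mem_Ioi.2 (by linarith : (0:ℝ) < y + 1)) (by linarith)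
    rw [psi_rec hx, psi_rec hy, ← heq] at h3
    have : 1/y < 1/x := one_div_lt_one_div_of_lt hx hxy
    linarith
  · exact h

lemma psi_zero_exists :
    ∃ c ∈ Set.Ioo (1:ℝ) (3/2), deriv (fun y : ℝ => Real.log (Real.Gamma y)) c = 0 := by
  obtain ⟨c, hc, hc0⟩ := exists_deriv_eq_zero (f := fun y : ℝ => Real.log (Real.Gamma y))
    (by norm_num : (1:ℝ) < 2) (logGamma_contOn one_pos)
    (by simp [Real.Gamma_one, Real.Gamma_two])
  refine ⟨c, ⟨hc.1, ?_⟩, hc0⟩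
  by_contra hle
  push_neg at hle
  have : deriv (fun y : ℝ => Real.log (Real.Gamma y)) (3/2)
      ≤ deriv (fun y : ℝ => Real.log (Real.Gamma y)) c :=
    psi_monotoneOn (Set.mem_Ioi.2 (by norm_num)) (Set.mem_Ioi.2 (by linarith [hc.1]))
      hle
  have := psi_three_half_pos
  linarith [hc0 ▸ this]

end gamma2

/-- The `q`-digamma function `ψ_q(x)`. For `0 < q < 1`,
`ψ_q(x) = -log(1-q) + (log q) ∑_{n≥1} q^{n x}/(1-q^n)`; for `q > 1`,
`ψ_q(x) = -log(q-1) + (log q)(x - 1/2 - ∑_{n≥1} q^{-n x}/(1-q^{-n}))`;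
for `q = 1` it is the classical digamma function `(log ∘ Γ)'`. -/
noncomputable def qDigamma (q x : ℝ) : ℝ :=
  if q < 1 then
    -Real.log (1 - q) +
      Real.log q * ∑' n : ℕ, q ^ (((n : ℝ) + 1) * x) / (1 - q ^ ((n : ℝ) + 1))
  else if 1 < q then
    -Real.log (q - 1) +
      Real.log q *
        (x - 1 / 2 - ∑' n : ℕ, q ^ (-(((n : ℝ) + 1) * x)) / (1 - q ^ (-((n : ℝ) + 1))))
  else
    deriv (fun y : ℝ => Real.log (Real.Gamma y)) x

/-- For every `q > 0`, `ψ_q` is strictly increasing on `(0,∞)` and has a uniquely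
determined positive zero `x_q`, which satisfies `1 < x_q < 3/2`. -/
theorem qDigamma_strictMonoOn_and_unique_zero (q : ℝ) (hq : 0 < q) :
    StrictMonoOn (qDigamma q) (Set.Ioi 0) ∧
      ∃ xq : ℝ, 1 < xq ∧ xq < 3 / 2 ∧ qDigamma q xq = 0 ∧
        ∀ y : ℝ, 0 < y → qDigamma q y = 0 → y = xq := by
  rcases lt_trichotomy q 1 with hq1 | rfl | hq1
  · -- case q < 1
    have hfun : qDigamma q = psiLow q := by
      funext x; simp only [qDigamma, if_pos hq1, psiLow]
    rw [hfun]
    obtain ⟨c, hc, hfc⟩ := find_zero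
      ((psiLow_contOn hq hq1).mono (Set.Icc_subset_Icc le_rfl (by norm_num)))
      (psiLow_one_neg hq hq1) (psiLow_three_half_pos hq hq1)
    exact ⟨psiLow_strictMono hq hq1, package (psiLow_strictMono hq hq1) hc.1 hc.2 hfc⟩
  · -- case q = 1
    have hfun : qDigamma 1 = deriv (fun y : ℝ => Real.log (Real.Gamma y)) := by
      funext x; simp [qDigamma]
    rw [hfun]
    obtain ⟨c, hc, hfc⟩ := psi_zero_exists
    exact ⟨psi_strictMono, package psi_strictMono hc.1 hc.2 hfc⟩
  · -- case 1 < q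
    have hp0 : (0:ℝ) < q⁻¹ := by positivity
    have hp1 : q⁻¹ < 1 := by
      rw [inv_lt_one_iff₀]; right; exact hq1
    have hfun : qDigamma q = fun x => psiLow q⁻¹ x + Real.log q * (x - 3/2) := by
      funext x
      simp only [qDigamma, if_neg (by linarith : ¬ q < 1), if_pos hq1]
      exact qDigamma_high_eq hq1 x
    rw [hfun]
    have hlogq : 0 < Real.log q := Real.log_pos hq1
    have hmono : StrictMonoOn (fun x => psiLow q⁻¹ x + Real.log q * (x - 3/2))
        (Set.Ioi 0) := by
      intro x hx y hy hxy
      have h1 := psiLow_strictMono hp0 hp1 hx hy hxy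
      have h2 : Real.log q * (x - 3/2) < Real.log q * (y - 3/2) :=
        mul_lt_mul_of_pos_left (by linarith) hlogq
      dsimp only; linarith
    have h1neg : psiLow q⁻¹ 1 + Real.log q * ((1:ℝ) - 3/2) < 0 := by
      have := psiLow_one_neg hp0 hp1; nlinarith
    have h32pos : (0:ℝ) < psiLow q⁻¹ (3/2) + Real.log q * ((3:ℝ)/2 - 3/2) := by
      have := psiLow_three_half_pos hp0 hp1; simpa using this
    have hcont : ContinuousOn (fun x => psiLow q⁻¹ x + Real.log q * (x - 3/2))
        (Set.Icc 1 (3/2)) :=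
      ((psiLow_contOn hp0 hp1).mono (Set.Icc_subset_Icc le_rfl (by norm_num))).add
        (Continuous.continuousOn (by continuity))
    obtain ⟨c, hc, hfc⟩ := find_zero hcont h1neg h32pos
    exact ⟨hmono, package hmono hc.1 hc.2 hfc⟩
end

section
/- For every q > 0, the functions x ↦ x·ψ_q(x) and x ↦ x·Γ'_q(x) are increasing (monotone nondecreasing) on the interval [1, ∞), where Γ'_q denotes the derivative of the q-gamma function Γ_q. -/
/-!
In every case `ψ_q` is nondecreasing on `(0, ∞)` and `Γ_q' = Γ_q ψ_q` with `Γ_q > 0`, so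
`x Γ_q'(x) = Γ_q(x) · x ψ_q(x)`. For `1 ≤ x ≤ y` this increases from `x` to `y`: if `x ψ_q(x) ≥ 0`
then `ψ_q ≥ 0` and `Γ_q` is nondecreasing on `[x, y]`; if `y ψ_q(y) ≤ 0` then `Γ_q` is
nonincreasing on `[x, y]`; otherwise the two values have opposite signs.

For `0 < q < 1`, expanding `-log (1 - q) = ∑ qᵐ / m` gives
`x ψ_q(x) = ∑_{m ≥ 1} (x qᵐ / m + log q · x q^{m x} / (1 - qᵐ))`, and each summand is
nondecreasing on `[1, ∞)`, which comes down to `exp (-u) ≤ 1 - u + u²` for `u ≥ 0`. The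
derivative of `log Γ_q(x) = (1 - x) log (1 - q) - ∑ₙ log (1 - q^{n+x}) + const` is identified
with `ψ_q` by expanding `q^{n+x} / (1 - q^{n+x})` as a geometric series and exchanging the two
sums.
For `q > 1`, `ψ_q(x) = ψ_{1/q}(x) + log q · (x - 3/2)` and `Γ_q(x) = Γ_{1/q}(x) q^{(x-1)(x-2)/2}`.
For `q = 1`, `x ψ(x) = x ψ(x + 1) - 1` and `ψ(x + 1) ≥ ψ(2) ≥ 0` by log-convexity of `Γ`.
-/

open Real

/-- The `q`-gamma function `Γ_q(x)`. For `0 < q < 1`,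
`Γ_q(x) = (1-q)^{1-x} ∏_{n≥0} (1-q^{n+1})/(1-q^{n+x})`; for `q > 1`,
`Γ_q(x) = (q-1)^{1-x} q^{x(x-1)/2} ∏_{n≥0} (1-q^{-(n+1)})/(1-q^{-(n+x)})`;
for `q = 1` it is Euler's Gamma function. -/
noncomputable def qGamma (q x : ℝ) : ℝ :=
  if q < 1 then
    (1 - q) ^ (1 - x) * ∏' n : ℕ, (1 - q ^ ((n : ℝ) + 1)) / (1 - q ^ ((n : ℝ) + x))
  else if 1 < q then
    (q - 1) ^ (1 - x) * q ^ (x * (x - 1) / 2) *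
      ∏' n : ℕ, (1 - q ^ (-((n : ℝ) + 1))) / (1 - q ^ (-((n : ℝ) + x)))
  else
    Real.Gamma x

open Set Filter Topology

lemma mul_le_mul_of_le_of_signs {a b c d : ℝ} (ha : 0 < a) (hb : 0 < b) (hcd : c ≤ d)
    (hab : 0 ≤ c → a ≤ b) (hba : d ≤ 0 → b ≤ a) : a * c ≤ b * d := by
  rcases le_total 0 c with hc | hc
  · exact mul_le_mul (hab hc) hcd hc hb.le
  rcases le_total d 0 with hd | hd
  · calc a * c ≤ a * d := mul_le_mul_of_nonneg_left hcd ha.le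
      _ ≤ b * d := mul_le_mul_of_nonpos_right (hba hd) hd
  · exact (mul_nonpos_of_nonneg_of_nonpos ha.le hc).trans (mul_nonneg hb.le hd)

theorem MonotoneOn.mul_deriv_of_hasDerivAt_mul {f ψ : ℝ → ℝ} {s : Set ℝ}
    (hs : s.OrdConnected) (hs₀ : s ⊆ Ioi 0) (hf : ∀ x ∈ s, HasDerivAt f (f x * ψ x) x)
    (hf₀ : ∀ x ∈ s, 0 < f x) (hψ : MonotoneOn ψ s) (hxψ : MonotoneOn (fun x => x * ψ x) s) :
    MonotoneOn (fun x => x * deriv f x) s := by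
  intro x hx y hy hxy
  have hIcc : Icc x y ⊆ s := hs.out hx hy
  have hcont : ContinuousOn f (Icc x y) := fun z hz =>
    (hf z (hIcc hz)).continuousAt.continuousWithinAt
  have hderiv : ∀ z ∈ interior (Icc x y),
      HasDerivWithinAt f (f z * ψ z) (interior (Icc x y)) z :=
    fun z hz => (hf z (hIcc (interior_subset hz))).hasDerivWithinAt
  have hx_mem : x ∈ Icc x y := left_mem_Icc.2 hxy
  have hy_mem : y ∈ Icc x y := right_mem_Icc.2 hxy
  simp only [(hf x hx).deriv, (hf y hy).deriv, mul_left_comm _ (f _)]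
  refine mul_le_mul_of_le_of_signs (hf₀ x hx) (hf₀ y hy) (hxψ hx hy hxy) (fun h => ?_)
    (fun h => ?_)
  · have hψx : 0 ≤ ψ x := (mul_nonneg_iff_of_pos_left (hs₀ hx)).1 h
    refine monotoneOn_of_hasDerivWithinAt_nonneg (convex_Icc x y) hcont hderiv (fun z hz => ?_)
      hx_mem hy_mem hxy
    have hz := interior_subset hz
    exact mul_nonneg (hf₀ z (hIcc hz)).le (hψx.trans (hψ hx (hIcc hz) hz.1))
  · have hψy : ψ y ≤ 0 := (mul_nonpos_iff_pos_imp_nonpos.1 h).1 (hs₀ hy)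
    refine antitoneOn_of_hasDerivWithinAt_nonpos (convex_Icc x y) hcont hderiv (fun z hz => ?_)
      hx_mem hy_mem hxy
    have hz := interior_subset hz
    exact mul_nonpos_of_nonneg_of_nonpos (hf₀ z (hIcc hz)).le ((hψ (hIcc hz) hy hz.2).trans hψy)

section qOne

variable {x : ℝ}

lemma qGamma_one : qGamma 1 = Gamma := by
  ext x
  simp [qGamma]

lemma qDigamma_one : qDigamma 1 = deriv fun y => log (Gamma y) := by
  ext x
  simp [qDigamma]

lemma differentiableAt_Gamma_of_pos (hx : 0 < x) : DifferentiableAt ℝ Gamma x :=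
  differentiableAt_Gamma fun m => ((neg_nonpos.2 (Nat.cast_nonneg m)).trans_lt hx).ne'

lemma hasDerivAt_log_Gamma (hx : 0 < x) :
    HasDerivAt (fun y => log (Gamma y)) (qDigamma 1 x) x := by
  rw [qDigamma_one]
  exact ((differentiableAt_Gamma_of_pos hx).log (Gamma_pos_of_pos hx).ne').hasDerivAt

lemma hasDerivAt_qGamma_one (hx : 0 < x) :
    HasDerivAt (qGamma 1) (qGamma 1 x * qDigamma 1 x) x := by
  have hΓ := (differentiableAt_Gamma_of_pos hx).hasDerivAt
  have hψ : qDigamma 1 x = deriv Gamma x / Gamma x :=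
    (hasDerivAt_log_Gamma hx).unique (hΓ.log (Gamma_pos_of_pos hx).ne')
  rwa [qGamma_one, hψ, mul_div_cancel₀ _ (Gamma_pos_of_pos hx).ne']

lemma qDigamma_one_add_one (hx : 0 < x) : qDigamma 1 (x + 1) = qDigamma 1 x + x⁻¹ := by
  have hshift : (fun y => log y + log (Gamma y)) =ᶠ[𝓝 x] fun y => log (Gamma (y + 1)) := by
    filter_upwards [Ioi_mem_nhds hx] with y hy
    rw [Gamma_add_one hy.ne', log_mul hy.ne' (Gamma_pos_of_pos hy).ne']
  have h := ((hasDerivAt_log hx.ne').add (hasDerivAt_log_Gamma hx)).congr_of_eventuallyEq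
    hshift.symm
  rw [add_comm (qDigamma 1 x)]
  exact ((hasDerivAt_log_Gamma (by linarith)).comp_add_const x 1).unique h

lemma monotoneOn_qDigamma_one : MonotoneOn (qDigamma 1) (Ioi 0) := by
  rw [qDigamma_one]
  exact convexOn_log_Gamma.monotoneOn_deriv fun x hx => (hasDerivAt_log_Gamma hx).differentiableAt

-- `log Γ` is convex and takes the value `0` at `1` and `2`.
lemma qDigamma_one_two_nonneg : 0 ≤ qDigamma 1 2 := by
  have h := convexOn_log_Gamma.slope_le_of_hasDerivAt (mem_Ioi.2 one_pos) (mem_Ioi.2 two_pos)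
    one_lt_two (hasDerivAt_log_Gamma two_pos)
  simpa [slope_def_field, Gamma_one, Gamma_two] using h

lemma monotoneOn_mul_qDigamma_one : MonotoneOn (fun x => x * qDigamma 1 x) (Ici 1) := by
  intro x hx y hy hxy
  have hx0 : 0 < x := one_pos.trans_le hx
  have hy0 : 0 < y := one_pos.trans_le hy
  have hshift : ∀ z, 0 < z → z * qDigamma 1 z = z * qDigamma 1 (z + 1) - 1 := fun z hz => by
    rw [qDigamma_one_add_one hz, mul_add, mul_inv_cancel₀ hz.ne']
    ring
  have hψx : 0 ≤ qDigamma 1 (x + 1) := qDigamma_one_two_nonneg.trans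
    (monotoneOn_qDigamma_one (mem_Ioi.2 two_pos) (mem_Ioi.2 (by linarith))
      (by linarith [mem_Ici.1 hx]))
  have hψxy : qDigamma 1 (x + 1) ≤ qDigamma 1 (y + 1) :=
    monotoneOn_qDigamma_one (mem_Ioi.2 (by linarith)) (mem_Ioi.2 (by linarith)) (by linarith)
  simp only [hshift x hx0, hshift y hy0]
  linarith [mul_le_mul hxy hψxy hψx hy0.le]

end qOne

section Lambert

variable {a b : ℝ}

lemma summable_pow_succ_div_one_sub_pow_succ (ha0 : 0 ≤ a) (ha1 : a < 1) (hb0 : 0 ≤ b)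
    (hb1 : b < 1) : Summable fun k : ℕ => a ^ (k + 1) / (1 - b ^ (k + 1)) := by
  have hb : ∀ k : ℕ, b ^ (k + 1) ≤ b := fun k => pow_le_of_le_one hb0 hb1.le k.succ_ne_zero
  refine Summable.of_nonneg_of_le
    (fun k => div_nonneg (pow_nonneg ha0 _) (by linarith [hb k])) (fun k => ?_)
    (((summable_geometric_of_lt_one ha0 ha1).mul_left a).div_const (1 - b))
  rw [pow_succ']
  exact div_le_div_of_nonneg_left (by positivity) (by linarith) (by linarith [hb k])

-- Both sides are `∑_{n,k} (a bⁿ)^(k+1)`, summed in the two possible orders.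
theorem tsum_mul_pow_div_one_sub_mul_pow (ha0 : 0 ≤ a) (ha1 : a < 1) (hb0 : 0 ≤ b)
    (hb1 : b < 1) :
    ∑' n : ℕ, a * b ^ n / (1 - a * b ^ n) = ∑' k : ℕ, a ^ (k + 1) / (1 - b ^ (k + 1)) := by
  have hcol : ∀ k : ℕ, HasSum (fun n : ℕ => a ^ (k + 1) * (b ^ (k + 1)) ^ n)
      (a ^ (k + 1) / (1 - b ^ (k + 1))) := fun k => by
    rw [div_eq_mul_inv]
    exact (hasSum_geometric_of_lt_one (pow_nonneg hb0 _)
      (pow_lt_one₀ hb0 hb1 k.succ_ne_zero)).mul_left _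
  have hrow : ∀ n : ℕ, HasSum (fun k : ℕ => a ^ (k + 1) * (b ^ (k + 1)) ^ n)
      (a * b ^ n / (1 - a * b ^ n)) := fun n => by
    have hab : a * b ^ n < 1 :=
      (mul_le_of_le_one_right ha0 (pow_le_one₀ hb0 hb1.le)).trans_lt ha1
    have e : (fun k : ℕ => a ^ (k + 1) * (b ^ (k + 1)) ^ n) =
        fun k => a * b ^ n * (a * b ^ n) ^ k := funext fun k => by ring
    rw [e, div_eq_mul_inv]
    exact (hasSum_geometric_of_lt_one (by positivity) hab).mul_left _
  have hsum : Summable (Function.uncurry fun k n : ℕ => a ^ (k + 1) * (b ^ (k + 1)) ^ n) :=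
    (summable_prod_of_nonneg fun _ =>
      mul_nonneg (pow_nonneg ha0 _) (pow_nonneg (pow_nonneg hb0 _) _)).2
      ⟨fun k => (hcol k).summable, by
        simpa only [Function.uncurry_apply_pair, (hcol _).tsum_eq] using
          summable_pow_succ_div_one_sub_pow_succ ha0 ha1 hb0 hb1⟩
  calc ∑' n : ℕ, a * b ^ n / (1 - a * b ^ n)
      = ∑' (n : ℕ) (k : ℕ), a ^ (k + 1) * (b ^ (k + 1)) ^ n :=
        tsum_congr fun n => (hrow n).tsum_eq.symm
    _ = ∑' (k : ℕ) (n : ℕ), a ^ (k + 1) * (b ^ (k + 1)) ^ n := hsum.tsum_comm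
    _ = _ := tsum_congr fun k => (hcol k).tsum_eq

end Lambert

lemma rpow_natCast_add_one (q : ℝ) (n : ℕ) : q ^ ((n : ℝ) + 1) = q ^ (n + 1) := by
  exact_mod_cast rpow_natCast q (n + 1)

lemma rpow_natCast_add_one_mul {q : ℝ} (hq0 : 0 ≤ q) (n : ℕ) (x : ℝ) :
    q ^ (((n : ℝ) + 1) * x) = (q ^ x) ^ (n + 1) := by
  rw [mul_comm, rpow_mul hq0, rpow_natCast_add_one]

section qLtOne

variable {q x : ℝ}

lemma summable_qDigamma_series (hq0 : 0 < q) (hq1 : q < 1) (hx : 0 < x) :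
    Summable fun n : ℕ => q ^ (((n : ℝ) + 1) * x) / (1 - q ^ ((n : ℝ) + 1)) := by
  simpa only [rpow_natCast_add_one_mul hq0.le, rpow_natCast_add_one] using
    summable_pow_succ_div_one_sub_pow_succ (rpow_nonneg hq0.le x) (rpow_lt_one hq0.le hq1 hx)
      hq0.le hq1

lemma monotoneOn_qDigamma_of_lt_one (hq0 : 0 < q) (hq1 : q < 1) :
    MonotoneOn (qDigamma q) (Ioi 0) := by
  intro x hx y hy hxy
  have hS : ∑' n : ℕ, q ^ (((n : ℝ) + 1) * y) / (1 - q ^ ((n : ℝ) + 1)) ≤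
      ∑' n : ℕ, q ^ (((n : ℝ) + 1) * x) / (1 - q ^ ((n : ℝ) + 1)) := by
    refine (summable_qDigamma_series hq0 hq1 hy).tsum_le_tsum (fun n => ?_)
      (summable_qDigamma_series hq0 hq1 hx)
    have hden : 0 ≤ 1 - q ^ ((n : ℝ) + 1) :=
      sub_nonneg.2 (rpow_le_one hq0.le hq1.le (by positivity))
    exact div_le_div_of_nonneg_right
      (rpow_le_rpow_of_exponent_ge hq0 hq1.le (mul_le_mul_of_nonneg_left hxy (by positivity))) hden
  simp only [qDigamma, if_pos hq1]
  linarith [mul_le_mul_of_nonpos_left hS (log_neg hq0 hq1).le]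

lemma hasSum_mul_qDigamma (hq0 : 0 < q) (hq1 : q < 1) (hx : 0 < x) :
    HasSum (fun n : ℕ => x * (q ^ ((n : ℝ) + 1) / ((n : ℝ) + 1)) +
      log q * x * (q ^ (((n : ℝ) + 1) * x) / (1 - q ^ ((n : ℝ) + 1)))) (x * qDigamma q x) := by
  have hlog : HasSum (fun n : ℕ => q ^ ((n : ℝ) + 1) / ((n : ℝ) + 1)) (-log (1 - q)) := by
    simpa only [rpow_natCast_add_one] using
      hasSum_pow_div_log_of_abs_lt_one (abs_lt.2 ⟨by linarith, hq1⟩)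
  rw [qDigamma, if_pos hq1, mul_add, mul_left_comm, ← mul_assoc]
  exact (hlog.mul_left x).add ((summable_qDigamma_series hq0 hq1 hx).hasSum.mul_left (log q * x))

-- `1 - u + u² ≥ 1 / (1 + u) ≥ exp (-u)`.
lemma mul_one_sub_mul_exp_neg_le {u s : ℝ} (hu : 0 ≤ u) (hus : u ≤ s) :
    u * (1 - s) * exp (-s) ≤ exp (-u) * (1 - exp (-u)) := by
  have hexp : exp (-u) ≤ 1 := exp_le_one_iff.2 (by linarith)
  rcases le_total 1 s with hs | hs
  · exact (mul_nonpos_of_nonpos_of_nonneg (mul_nonpos_of_nonneg_of_nonpos hu (by linarith))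
      (exp_pos _).le).trans (mul_nonneg (exp_pos _).le (by linarith))
  have hquad : u * (1 - u) ≤ 1 - exp (-u) := by
    have h : exp (-u) * (1 + u) ≤ 1 := by
      calc exp (-u) * (1 + u) ≤ exp (-u) * exp u := by
            gcongr
            linarith [add_one_le_exp u]
        _ = 1 := by rw [← exp_add, neg_add_cancel, exp_zero]
    nlinarith [pow_nonneg hu 3, exp_pos (-u)]
  calc u * (1 - s) * exp (-s) ≤ u * (1 - u) * exp (-u) :=
        mul_le_mul (mul_le_mul_of_nonneg_left (by linarith) hu) (exp_le_exp.2 (by linarith))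
          (exp_pos _).le (mul_nonneg hu (by linarith))
    _ ≤ (1 - exp (-u)) * exp (-u) := mul_le_mul_of_nonneg_right hquad (exp_pos _).le
    _ = exp (-u) * (1 - exp (-u)) := mul_comm _ _

lemma monotoneOn_mul_qDigamma_summand (hq0 : 0 < q) (hq1 : q < 1) {m : ℝ} (hm : 0 < m) :
    MonotoneOn (fun x => x * (q ^ m / m) + log q * x * (q ^ (m * x) / (1 - q ^ m))) (Ici 1) := by
  have hderiv : ∀ x,
      HasDerivAt (fun x => x * (q ^ m / m) + log q * x * (q ^ (m * x) / (1 - q ^ m)))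
      (q ^ m / m + log q * (q ^ (m * x) + x * (log q * m * q ^ (m * x))) / (1 - q ^ m)) x := by
    intro x
    have hexp : HasDerivAt (fun y => q ^ (m * y)) (log q * m * q ^ (m * x)) x := by
      simpa using ((hasDerivAt_id' x).const_mul m).const_rpow hq0
    have h := ((hasDerivAt_id' x).mul_const (q ^ m / m)).fun_add
      ((((hasDerivAt_id' x).fun_mul hexp).const_mul (log q)).div_const (1 - q ^ m))
    exact (h.congr_deriv (by ring)).congr_of_eventuallyEq (.of_forall fun y => by ring)
  refine monotoneOn_of_hasDerivWithinAt_nonneg (convex_Ici 1)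
    (fun x _ => (hderiv x).continuousAt.continuousWithinAt) (fun x _ => (hderiv x).hasDerivWithinAt)
    fun x hx => ?_
  rw [interior_Ici, mem_Ioi] at hx
  set u := -(log q * m) with hu_def
  have hu : 0 < u := by nlinarith [log_neg hq0 hq1]
  have hlogq : log q = -u / m := by rw [hu_def]; field_simp
  have hqm : q ^ m = exp (-u) := by rw [rpow_def_of_pos hq0, hu_def, neg_neg]
  have hqmx : q ^ (m * x) = exp (-(u * x)) := by rw [rpow_def_of_pos hq0, hu_def]; ring_nf
  have hc : 0 < 1 - exp (-u) := sub_pos.2 (exp_lt_one_iff.2 (neg_lt_zero.2 hu))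
  have key := mul_one_sub_mul_exp_neg_le hu.le (le_mul_of_one_le_right hu.le hx.le)
  rw [hqm, hqmx, hlogq]
  have e : exp (-u) / m + -u / m * (exp (-(u * x)) + x * (-u / m * m * exp (-(u * x)))) /
      (1 - exp (-u)) = (exp (-u) * (1 - exp (-u)) - u * (1 - u * x) * exp (-(u * x))) /
        (m * (1 - exp (-u))) := by
    field_simp
    ring
  rw [e]
  exact div_nonneg (by linarith) (mul_pos hm hc).le

lemma monotoneOn_mul_qDigamma_of_lt_one (hq0 : 0 < q) (hq1 : q < 1) :
    MonotoneOn (fun x => x * qDigamma q x) (Ici 1) := fun x hx y hy hxy =>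
  hasSum_le
    (fun n : ℕ => monotoneOn_mul_qDigamma_summand hq0 hq1 (m := (n : ℝ) + 1) (by positivity)
      hx hy hxy)
    (hasSum_mul_qDigamma hq0 hq1 (one_pos.trans_le hx))
    (hasSum_mul_qDigamma hq0 hq1 (one_pos.trans_le hy))

end qLtOne

section qLogGamma

variable {q x : ℝ}

noncomputable def qLogGamma (q x : ℝ) : ℝ :=
  (1 - x) * log (1 - q) +
    ∑' n : ℕ, (log (1 - q ^ ((n : ℝ) + 1)) - log (1 - q ^ ((n : ℝ) + x)))

lemma tsum_rpow_add_div_one_sub_rpow_add (hq0 : 0 < q) (hq1 : q < 1) (hx : 0 < x) :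
    ∑' n : ℕ, q ^ ((n : ℝ) + x) / (1 - q ^ ((n : ℝ) + x)) =
      ∑' n : ℕ, q ^ (((n : ℝ) + 1) * x) / (1 - q ^ ((n : ℝ) + 1)) := by
  have e : ∀ n : ℕ, q ^ ((n : ℝ) + x) = q ^ x * q ^ n := fun n => by
    rw [rpow_add hq0, rpow_natCast, mul_comm]
  simpa only [e, rpow_natCast_add_one_mul hq0.le, rpow_natCast_add_one] using
    tsum_mul_pow_div_one_sub_mul_pow (rpow_nonneg hq0.le x) (rpow_lt_one hq0.le hq1 hx) hq0.le hq1

lemma one_sub_rpow_natCast_add_pos (hq0 : 0 < q) (hq1 : q < 1) (hx : 0 < x) (n : ℕ) :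
    0 < 1 - q ^ ((n : ℝ) + x) :=
  sub_pos.2 (rpow_lt_one hq0.le hq1 (by positivity))

lemma hasDerivAt_qLogGamma_summand (hq0 : 0 < q) (hq1 : q < 1) (n : ℕ) (hx : 0 < x) :
    HasDerivAt (fun y => log (1 - q ^ ((n : ℝ) + 1)) - log (1 - q ^ ((n : ℝ) + y)))
      (log q * (q ^ ((n : ℝ) + x) / (1 - q ^ ((n : ℝ) + x)))) x := by
  have h := ((((hasDerivAt_id' x).const_add (n : ℝ)).const_rpow hq0).const_sub 1).log
    (one_sub_rpow_natCast_add_pos hq0 hq1 hx n).ne'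
  exact ((hasDerivAt_const x _).sub h).congr_deriv (by ring)

lemma norm_qLogGamma_summand_deriv_le (hq0 : 0 < q) (hq1 : q < 1) {a : ℝ} (ha : 0 < a)
    (hax : a ≤ x) (n : ℕ) :
    ‖log q * (q ^ ((n : ℝ) + x) / (1 - q ^ ((n : ℝ) + x)))‖ ≤
      -log q * (q ^ a / (1 - q ^ a)) * q ^ n := by
  have hn : (0 : ℝ) ≤ n := n.cast_nonneg
  have hnum : q ^ ((n : ℝ) + x) ≤ q ^ a * q ^ n := by
    rw [← rpow_natCast, ← rpow_add hq0]
    exact rpow_le_rpow_of_exponent_ge hq0 hq1.le (by linarith)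
  have hden : 1 - q ^ a ≤ 1 - q ^ ((n : ℝ) + x) :=
    sub_le_sub_left (rpow_le_rpow_of_exponent_ge hq0 hq1.le (by linarith)) 1
  have hqa : 0 < 1 - q ^ a := sub_pos.2 (rpow_lt_one hq0.le hq1 ha)
  rw [norm_mul, norm_div, norm_of_nonpos (log_neg hq0 hq1).le, norm_of_nonneg (by positivity),
    norm_of_nonneg (one_sub_rpow_natCast_add_pos hq0 hq1 (ha.trans_le hax) n).le, mul_assoc,
    div_mul_eq_mul_div]
  exact mul_le_mul_of_nonneg_left (div_le_div₀ (by positivity) hnum hqa hden)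
    (neg_nonneg.2 (log_neg hq0 hq1).le)

lemma summable_qLogGamma_summand (hq0 : 0 < q) (hq1 : q < 1) (hx : 0 < x) :
    Summable fun n : ℕ => log (1 - q ^ ((n : ℝ) + 1)) - log (1 - q ^ ((n : ℝ) + x)) := by
  obtain ⟨a, ha, hamin⟩ := exists_between (lt_min one_pos hx)
  have hzero :
      Summable fun n : ℕ => log (1 - q ^ ((n : ℝ) + 1)) - log (1 - q ^ ((n : ℝ) + 1)) := by
    simpa only [sub_self] using summable_zero
  exact summable_of_summable_hasDerivAt_of_isPreconnected
    (g := fun (n : ℕ) y => log (1 - q ^ ((n : ℝ) + 1)) - log (1 - q ^ ((n : ℝ) + y)))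
    ((summable_geometric_of_lt_one hq0.le hq1).mul_left _) isOpen_Ioi isPreconnected_Ioi
    (fun n y hy => hasDerivAt_qLogGamma_summand hq0 hq1 n (ha.trans hy))
    (fun n y hy => norm_qLogGamma_summand_deriv_le hq0 hq1 ha (le_of_lt hy) n)
    (mem_Ioi.2 (hamin.trans_le (min_le_left 1 x))) hzero
    (mem_Ioi.2 (hamin.trans_le (min_le_right 1 x)))

lemma hasDerivAt_qLogGamma (hq0 : 0 < q) (hq1 : q < 1) (hx : 0 < x) :
    HasDerivAt (qLogGamma q) (qDigamma q x) x := by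
  have hx2 : x / 2 < x := half_lt_self hx
  have hseries := hasDerivAt_tsum_of_isPreconnected
    ((summable_geometric_of_lt_one hq0.le hq1).mul_left _) isOpen_Ioi isPreconnected_Ioi
    (fun n y hy => hasDerivAt_qLogGamma_summand hq0 hq1 n ((half_pos hx).trans hy))
    (fun n y hy => norm_qLogGamma_summand_deriv_le hq0 hq1 (half_pos hx) (le_of_lt hy) n)
    hx2 (summable_qLogGamma_summand hq0 hq1 hx) hx2
  have hlin : HasDerivAt (fun y => (1 - y) * log (1 - q)) (-log (1 - q)) x := by
    simpa using ((hasDerivAt_id' x).const_sub 1).mul_const (log (1 - q))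
  refine (hlin.fun_add hseries).congr_deriv ?_
  rw [tsum_mul_left, tsum_rpow_add_div_one_sub_rpow_add hq0 hq1 hx, qDigamma, if_pos hq1]

lemma qGamma_eq_exp_qLogGamma (hq0 : 0 < q) (hq1 : q < 1) (hx : 0 < x) :
    qGamma q x = exp (qLogGamma q x) := by
  have h1 := one_sub_rpow_natCast_add_pos hq0 hq1 one_pos
  have hx' := one_sub_rpow_natCast_add_pos hq0 hq1 hx
  have hlog : ∀ n : ℕ, log ((1 - q ^ ((n : ℝ) + 1)) / (1 - q ^ ((n : ℝ) + x))) =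
      log (1 - q ^ ((n : ℝ) + 1)) - log (1 - q ^ ((n : ℝ) + x)) := fun n =>
    log_div (h1 n).ne' (hx' n).ne'
  rw [qGamma, if_pos hq1, qLogGamma, exp_add, ← tsum_congr hlog,
    rexp_tsum_eq_tprod (fun n => div_pos (h1 n) (hx' n))
      ((summable_qLogGamma_summand hq0 hq1 hx).congr fun n => (hlog n).symm),
    rpow_def_of_pos (sub_pos.2 hq1), mul_comm (log (1 - q))]

lemma qGamma_pos_of_lt_one (hq0 : 0 < q) (hq1 : q < 1) (hx : 0 < x) : 0 < qGamma q x :=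
  qGamma_eq_exp_qLogGamma hq0 hq1 hx ▸ exp_pos _

lemma hasDerivAt_qGamma_of_lt_one (hq0 : 0 < q) (hq1 : q < 1) (hx : 0 < x) :
    HasDerivAt (qGamma q) (qGamma q x * qDigamma q x) x := by
  have h := (hasDerivAt_qLogGamma hq0 hq1 hx).exp
  rw [← qGamma_eq_exp_qLogGamma hq0 hq1 hx] at h
  refine h.congr_of_eventuallyEq ?_
  filter_upwards [Ioi_mem_nhds hx] with y hy using qGamma_eq_exp_qLogGamma hq0 hq1 hy

end qLogGamma

section qGtOne

variable {q x : ℝ}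

lemma qDigamma_of_one_lt (hq : 1 < q) (x : ℝ) :
    qDigamma q x = qDigamma q⁻¹ x + log q * (x - 3 / 2) := by
  have hq0 : 0 < q := one_pos.trans hq
  have hlog : log (q - 1) = log (1 - q⁻¹) + log q := by
    rw [← log_mul (sub_pos.2 (inv_lt_one_of_one_lt₀ hq)).ne' hq0.ne', sub_mul, one_mul,
      inv_mul_cancel₀ hq0.ne']
  simp only [qDigamma, if_neg hq.not_gt, if_pos hq, if_pos (inv_lt_one_of_one_lt₀ hq),
    rpow_neg_eq_inv_rpow, hlog, log_inv]
  ring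

lemma qGamma_of_one_lt (hq : 1 < q) :
    qGamma q = fun x => qGamma q⁻¹ x * q ^ ((x - 1) * (x - 2) / 2) := by
  have hq0 : 0 < q := one_pos.trans hq
  have hsplit : q - 1 = (1 - q⁻¹) * q := by
    rw [sub_mul, one_mul, inv_mul_cancel₀ hq0.ne']
  ext x
  simp only [qGamma, if_neg hq.not_gt, if_pos hq, if_pos (inv_lt_one_of_one_lt₀ hq),
    rpow_neg_eq_inv_rpow, hsplit,
    mul_rpow (sub_pos.2 (inv_lt_one_of_one_lt₀ hq)).le hq0.le]
  have hpow : q ^ (1 - x) * q ^ (x * (x - 1) / 2) = q ^ ((x - 1) * (x - 2) / 2) := by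
    rw [← rpow_add hq0]
    ring_nf
  rw [← hpow]
  ring

lemma hasDerivAt_qGamma_of_one_lt (hq : 1 < q) (hx : 0 < x) :
    HasDerivAt (qGamma q) (qGamma q x * qDigamma q x) x := by
  have hq0 : 0 < q := one_pos.trans hq
  have hpoly : HasDerivAt (fun y => (y - 1) * (y - 2) / 2) (x - 3 / 2) x :=
    ((((hasDerivAt_id' x).sub_const 1).fun_mul ((hasDerivAt_id' x).sub_const 2)).div_const
      2).congr_deriv (by ring)
  have h := (hasDerivAt_qGamma_of_lt_one (inv_pos.2 hq0) (inv_lt_one_of_one_lt₀ hq) hx).fun_mul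
    (hpoly.const_rpow hq0)
  rw [qGamma_of_one_lt hq, qDigamma_of_one_lt hq]
  exact h.congr_deriv (by ring)

lemma monotoneOn_qDigamma_of_one_lt (hq : 1 < q) : MonotoneOn (qDigamma q) (Ioi 0) := by
  intro x hx y hy hxy
  rw [qDigamma_of_one_lt hq, qDigamma_of_one_lt hq]
  exact add_le_add
    (monotoneOn_qDigamma_of_lt_one (inv_pos.2 (one_pos.trans hq)) (inv_lt_one_of_one_lt₀ hq)
      hx hy hxy)
    (mul_le_mul_of_nonneg_left (by linarith) (log_nonneg hq.le))

lemma monotoneOn_mul_qDigamma_of_one_lt (hq : 1 < q) :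
    MonotoneOn (fun x => x * qDigamma q x) (Ici 1) := by
  intro x hx y hy hxy
  have h := monotoneOn_mul_qDigamma_of_lt_one (inv_pos.2 (one_pos.trans hq))
    (inv_lt_one_of_one_lt₀ hq) hx hy hxy
  have hpoly : x * (x - 3 / 2) ≤ y * (y - 3 / 2) := by nlinarith [mem_Ici.1 hx]
  simp only [qDigamma_of_one_lt hq, mul_add, mul_left_comm _ (log q)] at h ⊢
  linarith [mul_le_mul_of_nonneg_left hpoly (log_nonneg hq.le)]

end qGtOne

section qGamma

variable {q x : ℝ}

lemma qGamma_pos (hq : 0 < q) (hx : 0 < x) : 0 < qGamma q x := by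
  rcases lt_trichotomy q 1 with hq1 | rfl | hq1
  · exact qGamma_pos_of_lt_one hq hq1 hx
  · exact qGamma_one ▸ Gamma_pos_of_pos hx
  · rw [qGamma_of_one_lt hq1]
    exact mul_pos (qGamma_pos_of_lt_one (inv_pos.2 hq) (inv_lt_one_of_one_lt₀ hq1) hx)
      (rpow_pos_of_pos hq _)

lemma hasDerivAt_qGamma (hq : 0 < q) (hx : 0 < x) :
    HasDerivAt (qGamma q) (qGamma q x * qDigamma q x) x := by
  rcases lt_trichotomy q 1 with hq1 | rfl | hq1
  · exact hasDerivAt_qGamma_of_lt_one hq hq1 hx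
  · exact hasDerivAt_qGamma_one hx
  · exact hasDerivAt_qGamma_of_one_lt hq1 hx

lemma monotoneOn_qDigamma (hq : 0 < q) : MonotoneOn (qDigamma q) (Ioi 0) := by
  rcases lt_trichotomy q 1 with hq1 | rfl | hq1
  · exact monotoneOn_qDigamma_of_lt_one hq hq1
  · exact monotoneOn_qDigamma_one
  · exact monotoneOn_qDigamma_of_one_lt hq1

lemma monotoneOn_mul_qDigamma (hq : 0 < q) : MonotoneOn (fun x => x * qDigamma q x) (Ici 1) := by
  rcases lt_trichotomy q 1 with hq1 | rfl | hq1
  · exact monotoneOn_mul_qDigamma_of_lt_one hq hq1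
  · exact monotoneOn_mul_qDigamma_one
  · exact monotoneOn_mul_qDigamma_of_one_lt hq1

end qGamma

/-- For every `q > 0`, the functions `x ↦ x·ψ_q(x)` and `x ↦ x·Γ_q'(x)` are
increasing (monotone nondecreasing) on `[1,∞)`. -/
theorem mul_qDigamma_and_mul_deriv_qGamma_monotoneOn (q : ℝ) (hq : 0 < q) :
    MonotoneOn (fun x : ℝ => x * qDigamma q x) (Set.Ici 1) ∧
      MonotoneOn (fun x : ℝ => x * deriv (qGamma q) x) (Set.Ici 1) := by
  have hpos : Ici (1 : ℝ) ⊆ Ioi 0 := fun x hx => mem_Ioi.2 (one_pos.trans_le hx)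
  exact ⟨monotoneOn_mul_qDigamma hq,
    MonotoneOn.mul_deriv_of_hasDerivAt_mul ordConnected_Ici hpos
      (fun x hx => hasDerivAt_qGamma hq (hpos hx)) (fun x hx => qGamma_pos hq (hpos hx))
      ((monotoneOn_qDigamma hq).mono hpos) (monotoneOn_mul_qDigamma hq)⟩
end

section
/- For every q with 0 < q < 1, the function x ↦ x·ψ'_q(x) is strictly decreasing on (0, ∞). -/
/-! Write `t = q ^ x` and `μₙ = n / (1 - qⁿ)`. Differentiating termwise gives
`ψ_q'(x) = (log q)² ∑ μₙ tⁿ` and `(x ψ_q'(x))' = (log q)² ∑ μₙ (1 + n x log q) tⁿ`.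
The weights `μₙ` increase with `n`, while the factor `1 + n x log q` changes sign once, from `+`
to `-`, at some index `N`. Hence the last sum is at most
`μ_N ∑ (1 + n x log q) tⁿ = μ_N t (1 + x log q - t) / (1 - t)²`,
which is negative because `t = exp (x log q) > 1 + x log q`. -/

open Real

lemma summable_succ_pow_mul_pow_succ (k : ℕ) {t : ℝ} (ht0 : 0 ≤ t) (ht1 : t < 1) :
    Summable fun n : ℕ => ((n : ℝ) + 1) ^ k * t ^ (n + 1) := by
  have h := summable_pow_mul_geometric_of_norm_lt_one k (by rwa [norm_of_nonneg ht0])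
  refine ((summable_nat_add_iff 1).2 h).congr fun n => ?_
  push_cast
  rfl

lemma summable_mul_pow_succ_of_abs_le {b : ℕ → ℝ} {C : ℝ} {k : ℕ}
    (hb : ∀ n, |b n| ≤ C * ((n : ℝ) + 1) ^ k) {t : ℝ} (ht0 : 0 ≤ t) (ht1 : t < 1) :
    Summable fun n => b n * t ^ (n + 1) := by
  refine .of_norm_bounded ((summable_succ_pow_mul_pow_succ k ht0 ht1).mul_left C) fun n => ?_
  rw [norm_mul, norm_of_nonneg (pow_nonneg ht0 _), ← mul_assoc]
  exact mul_le_mul_of_nonneg_right (hb n) (pow_nonneg ht0 _)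

lemma abs_mul_succ_mul_le {b : ℕ → ℝ} {C : ℝ} {k : ℕ}
    (hb : ∀ n, |b n| ≤ C * ((n : ℝ) + 1) ^ k) (c : ℝ) (n : ℕ) :
    |b n * (((n : ℝ) + 1) * c)| ≤ C * |c| * ((n : ℝ) + 1) ^ (k + 1) := by
  rw [abs_mul, abs_mul, abs_of_pos (by positivity : (0 : ℝ) < n + 1)]
  calc |b n| * ((n + 1) * |c|) ≤ C * ((n : ℝ) + 1) ^ k * ((n + 1) * |c|) := by
        gcongr; exact hb n
    _ = C * |c| * ((n : ℝ) + 1) ^ (k + 1) := by ring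

lemma hasDerivAt_rpow_pow_succ {q : ℝ} (hq : 0 < q) (n : ℕ) (y : ℝ) :
    HasDerivAt (fun y => (q ^ y) ^ (n + 1)) (((n : ℝ) + 1) * log q * (q ^ y) ^ (n + 1)) y :=
  ((hasStrictDerivAt_const_rpow hq y).hasDerivAt.fun_pow (n + 1)).congr_deriv
    (by push_cast; ring)

lemma hasDerivAt_tsum_mul_rpow_pow_succ {q : ℝ} (hq0 : 0 < q) (hq1 : q < 1) {b : ℕ → ℝ}
    {C : ℝ} {k : ℕ} (hb : ∀ n, |b n| ≤ C * ((n : ℝ) + 1) ^ k) {x : ℝ} (hx : 0 < x) :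
    HasDerivAt (fun y => ∑' n, b n * (q ^ y) ^ (n + 1))
      (∑' n, b n * (((n : ℝ) + 1) * log q) * (q ^ x) ^ (n + 1)) x := by
  have hlt : ∀ y : ℝ, 0 < y → q ^ y < 1 := fun _ hy => rpow_lt_one hq0.le hq1 hy
  -- on `(x/2, ∞)` every term is dominated by its value at `x/2`
  refine hasDerivAt_tsum_of_isPreconnected (g := fun (n : ℕ) y => b n * (q ^ y) ^ (n + 1))
    (g' := fun (n : ℕ) y => b n * (((n : ℝ) + 1) * log q) * (q ^ y) ^ (n + 1))
    (u := fun (n : ℕ) => C * |log q| * ((n : ℝ) + 1) ^ (k + 1) * (q ^ (x / 2)) ^ (n + 1))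
    ?_ isOpen_Ioi (convex_Ioi (x / 2)).isPreconnected
    (fun n y _ => ?_) (fun n y hy => ?_) (half_lt_self hx)
    (summable_mul_pow_succ_of_abs_le hb (by positivity) (hlt x hx)) (half_lt_self hx)
  · simpa only [mul_assoc] using
      (summable_succ_pow_mul_pow_succ (k + 1) (by positivity) (hlt _ (half_pos hx))).mul_left
        (C * |log q|)
  · exact ((hasDerivAt_rpow_pow_succ hq0 n y).const_mul (b n)).congr_deriv (by ring)
  · have hqy : 0 ≤ q ^ y := rpow_nonneg hq0.le y
    rw [Real.norm_eq_abs, abs_mul, abs_of_nonneg (pow_nonneg hqy _)]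
    exact mul_le_mul (abs_mul_succ_mul_le hb _ n)
      (pow_le_pow_left₀ (by positivity) (rpow_le_rpow_of_exponent_ge hq0 hq1.le (le_of_lt hy)) _)
      (by positivity) ((abs_nonneg _).trans (abs_mul_succ_mul_le hb _ n))

lemma hasSum_one_add_succ_mul_mul_pow_succ {t : ℝ} (ht0 : 0 ≤ t) (ht1 : t < 1) (v : ℝ) :
    HasSum (fun n : ℕ => (1 + ((n : ℝ) + 1) * v) * t ^ (n + 1))
      (t * (1 + v - t) / (1 - t) ^ 2) := by
  have h1 := hasSum_coe_mul_geometric_of_norm_lt_one (𝕜 := ℝ) (by rwa [norm_of_nonneg ht0])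
  have h2 := hasSum_geometric_of_lt_one ht0 ht1
  have h := ((h1.mul_left v).add (h2.mul_left (1 + v))).mul_left t
  have ht : 1 - t ≠ 0 := by linarith
  rw [show t * (v * (t / (1 - t) ^ 2) + (1 + v) * (1 - t)⁻¹) = t * (1 + v - t) / (1 - t) ^ 2 by
    field_simp; ring] at h
  exact h.congr_fun fun n => by ring

lemma tsum_mul_le_mul_tsum_of_monotone_of_signChange {μ g : ℕ → ℝ} (hμ : Monotone μ)
    {N : ℕ} (hg_nonneg : ∀ n < N, 0 ≤ g n) (hg_nonpos : ∀ n, N ≤ n → g n ≤ 0)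
    (hg : Summable g) (hμg : Summable fun n => μ n * g n) : ∑' n, μ n * g n ≤ μ N * ∑' n, g n := by
  rw [← tsum_mul_left]
  refine hμg.tsum_le_tsum (fun n => ?_) (hg.mul_left _)
  rcases lt_or_ge n N with h | h
  · exact mul_le_mul_of_nonneg_right (hμ h.le) (hg_nonneg n h)
  · exact mul_le_mul_of_nonpos_right (hμ h) (hg_nonpos n h)

lemma tsum_mul_one_add_succ_mul_mul_pow_succ_neg {μ : ℕ → ℝ} (hμ : Monotone μ)
    (hμ0 : 0 < μ 0) {C : ℝ} {k : ℕ} (hb : ∀ n, |μ n| ≤ C * ((n : ℝ) + 1) ^ k) {t v : ℝ}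
    (ht0 : 0 < t) (ht1 : t < 1) (hvt : 1 + v < t) :
    ∑' n : ℕ, μ n * (1 + ((n : ℝ) + 1) * v) * t ^ (n + 1) < 0 := by
  have hv : 0 < -v := by linarith
  have hg := hasSum_one_add_succ_mul_mul_pow_succ ht0.le ht1 v
  have hμg : Summable fun n : ℕ => μ n * ((1 + ((n : ℝ) + 1) * v) * t ^ (n + 1)) :=
    ((summable_mul_pow_succ_of_abs_le hb ht0.le ht1).add
      (summable_mul_pow_succ_of_abs_le (abs_mul_succ_mul_le hb v) ht0.le ht1)).congr
      fun n => by ring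
  -- the factor `1 + (n + 1) v` changes sign once, at `n + 1 ≈ 1 / -v`
  set N := ⌊1 / -v⌋₊
  have hpre : ∀ n < N, 0 ≤ (1 + ((n : ℝ) + 1) * v) * t ^ (n + 1) := fun n hn => by
    have : ((n : ℝ) + 1) * -v ≤ 1 := by
      rw [← le_div_iff₀ hv]
      exact_mod_cast (Nat.le_floor_iff (by positivity)).1 hn
    nlinarith [pow_pos ht0 (n + 1)]
  have hpost : ∀ n, N ≤ n → (1 + ((n : ℝ) + 1) * v) * t ^ (n + 1) ≤ 0 := fun n hn => by
    have : 1 < ((n : ℝ) + 1) * -v := by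
      rw [← div_lt_iff₀ hv]
      exact (Nat.lt_floor_add_one _).trans_le (by exact_mod_cast Nat.add_le_add_right hn 1)
    nlinarith [pow_pos ht0 (n + 1)]
  calc ∑' n : ℕ, μ n * (1 + ((n : ℝ) + 1) * v) * t ^ (n + 1)
      = ∑' n : ℕ, μ n * ((1 + ((n : ℝ) + 1) * v) * t ^ (n + 1)) :=
        tsum_congr fun n => mul_assoc _ _ _
    _ ≤ μ N * ∑' n : ℕ, (1 + ((n : ℝ) + 1) * v) * t ^ (n + 1) :=
        tsum_mul_le_mul_tsum_of_monotone_of_signChange hμ hpre hpost hg.summable hμg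
    _ < 0 := by
        rw [hg.tsum_eq]
        refine mul_neg_of_pos_of_neg (hμ0.trans_le (hμ N.zero_le)) (div_neg_of_neg_of_pos ?_ ?_)
        · exact mul_neg_of_pos_of_neg ht0 (by linarith)
        · nlinarith

-- the weight `μ_{n+1}` of the sketch above: all series here are indexed from `0`
noncomputable def qTrigammaCoeff (q : ℝ) (n : ℕ) : ℝ := ((n : ℝ) + 1) / (1 - q ^ (n + 1))

noncomputable def qTrigammaSeries (q y : ℝ) : ℝ :=
  log q ^ 2 * ∑' n : ℕ, qTrigammaCoeff q n * (q ^ y) ^ (n + 1)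

lemma one_sub_pow_succ_pos {q : ℝ} (hq0 : 0 < q) (hq1 : q < 1) (n : ℕ) : 0 < 1 - q ^ (n + 1) :=
  sub_pos.2 (pow_lt_one₀ hq0.le hq1 n.succ_ne_zero)

lemma qTrigammaCoeff_pos {q : ℝ} (hq0 : 0 < q) (hq1 : q < 1) (n : ℕ) : 0 < qTrigammaCoeff q n :=
  div_pos (by positivity) (one_sub_pow_succ_pos hq0 hq1 n)

lemma monotone_qTrigammaCoeff {q : ℝ} (hq0 : 0 < q) (hq1 : q < 1) :
    Monotone (qTrigammaCoeff q) := by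
  refine monotone_nat_of_le_succ fun n => ?_
  -- each of the `n + 1` terms of `∑_{r ≤ n} q^r` is at least `q^(n+1)`
  have hsum : (n + 1) * q ^ (n + 1) ≤ ∑ r ∈ Finset.range (n + 1), q ^ r := by
    simpa using Finset.card_nsmul_le_sum (Finset.range (n + 1)) (q ^ ·) (q ^ (n + 1))
      fun r hr => pow_le_pow_of_le_one hq0.le hq1.le (Finset.mem_range.1 hr).le
  rw [qTrigammaCoeff, qTrigammaCoeff,
    div_le_div_iff₀ (one_sub_pow_succ_pos hq0 hq1 n) (one_sub_pow_succ_pos hq0 hq1 (n + 1))]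
  push_cast
  rw [pow_succ q (n + 1)]
  linarith [mul_le_mul_of_nonneg_left hsum (sub_pos.2 hq1).le, mul_neg_geom_sum q (n + 1)]

lemma inv_one_sub_pow_succ_le {q : ℝ} (hq0 : 0 < q) (hq1 : q < 1) (n : ℕ) :
    (1 - q ^ (n + 1))⁻¹ ≤ (1 - q)⁻¹ := by
  have hle : q ^ (n + 1) ≤ q := pow_le_of_le_one hq0.le hq1.le n.succ_ne_zero
  gcongr

lemma abs_qTrigammaCoeff_le {q : ℝ} (hq0 : 0 < q) (hq1 : q < 1) (n : ℕ) :
    |qTrigammaCoeff q n| ≤ (1 - q)⁻¹ * ((n : ℝ) + 1) ^ 1 := by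
  rw [abs_of_pos (qTrigammaCoeff_pos hq0 hq1 n), qTrigammaCoeff, pow_one, div_eq_inv_mul]
  exact mul_le_mul_of_nonneg_right (inv_one_sub_pow_succ_le hq0 hq1 n) (by positivity)

lemma qDigamma_eq_tsum {q : ℝ} (hq0 : 0 < q) (hq1 : q < 1) (x : ℝ) :
    qDigamma q x =
      -log (1 - q) + log q * ∑' n : ℕ, (1 - q ^ (n + 1))⁻¹ * (q ^ x) ^ (n + 1) := by
  rw [qDigamma, if_pos hq1]
  congr 2
  refine tsum_congr fun n => ?_
  rw [div_eq_inv_mul, mul_comm _ x, rpow_mul hq0.le]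
  norm_cast

lemma hasDerivAt_qDigamma {q : ℝ} (hq0 : 0 < q) (hq1 : q < 1) {x : ℝ} (hx : 0 < x) :
    HasDerivAt (qDigamma q) (qTrigammaSeries q x) x := by
  have hb (n : ℕ) : |(1 - q ^ (n + 1))⁻¹| ≤ (1 - q)⁻¹ * ((n : ℝ) + 1) ^ 0 := by
    rw [abs_of_pos (inv_pos.2 (one_sub_pow_succ_pos hq0 hq1 n)), pow_zero, mul_one]
    exact inv_one_sub_pow_succ_le hq0 hq1 n
  rw [show qDigamma q = _ from funext (qDigamma_eq_tsum hq0 hq1)]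
  refine (((hasDerivAt_tsum_mul_rpow_pow_succ hq0 hq1 hb hx).const_mul (log q)).const_add
    _).congr_deriv ?_
  rw [qTrigammaSeries, ← tsum_mul_left, ← tsum_mul_left]
  congr 1 with n
  rw [qTrigammaCoeff]
  ring

lemma hasDerivAt_mul_qTrigammaSeries {q : ℝ} (hq0 : 0 < q) (hq1 : q < 1) {x : ℝ} (hx : 0 < x) :
    HasDerivAt (fun y => y * qTrigammaSeries q y)
      (log q ^ 2 * ∑' n : ℕ, qTrigammaCoeff q n * (1 + ((n : ℝ) + 1) * (x * log q)) *
        (q ^ x) ^ (n + 1)) x := by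
  have hb := abs_qTrigammaCoeff_le hq0 hq1
  have ht0 : 0 ≤ q ^ x := rpow_nonneg hq0.le x
  have ht1 : q ^ x < 1 := rpow_lt_one hq0.le hq1 hx
  have hS := summable_mul_pow_succ_of_abs_le hb ht0 ht1
  have hS' := summable_mul_pow_succ_of_abs_le (abs_mul_succ_mul_le hb (log q)) ht0 ht1
  refine ((hasDerivAt_id x).mul
    ((hasDerivAt_tsum_mul_rpow_pow_succ hq0 hq1 hb hx).const_mul (log q ^ 2))).congr_deriv ?_
  have hsplit : ∑' n : ℕ, qTrigammaCoeff q n * (1 + ((n : ℝ) + 1) * (x * log q)) *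
      (q ^ x) ^ (n + 1) = ∑' n : ℕ, qTrigammaCoeff q n * (q ^ x) ^ (n + 1) +
      x * ∑' n : ℕ, qTrigammaCoeff q n * (((n : ℝ) + 1) * log q) * (q ^ x) ^ (n + 1) := by
    rw [← tsum_mul_left, ← hS.tsum_add (hS'.mul_left x)]
    exact tsum_congr fun n => by ring
  rw [hsplit, id]
  ring

/-- For every `0 < q < 1`, the function `x ↦ x·ψ_q'(x)` is strictly decreasing on `(0,∞)`. -/
theorem mul_deriv_qDigamma_strictAntiOn (q : ℝ) (hq0 : 0 < q) (hq1 : q < 1) :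
    StrictAntiOn (fun x : ℝ => x * deriv (qDigamma q) x) (Set.Ioi 0) := by
  have hD := fun x (hx : 0 < x) => hasDerivAt_mul_qTrigammaSeries hq0 hq1 hx
  refine (strictAntiOn_of_hasDerivWithinAt_neg (convex_Ioi 0)
    (fun x hx => (hD x hx).continuousAt.continuousWithinAt)
    (fun x hx => (hD x (interior_subset hx)).hasDerivWithinAt) fun x hx => ?_).congr
    fun x hx => by simp only [(hasDerivAt_qDigamma hq0 hq1 hx).deriv]
  rw [interior_Ioi] at hx
  have hlog : log q ≠ 0 := (log_neg hq0 hq1).ne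
  have hvt : 1 + x * log q < q ^ x := by
    rw [rpow_def_of_pos hq0, mul_comm (log q), add_comm]
    exact add_one_lt_exp (mul_ne_zero hx.ne' hlog)
  exact mul_neg_of_pos_of_neg (by positivity) (tsum_mul_one_add_succ_mul_mul_pow_succ_neg
    (monotone_qTrigammaCoeff hq0 hq1) (qTrigammaCoeff_pos hq0 hq1 0)
    (abs_qTrigammaCoeff_le hq0 hq1) (rpow_pos_of_pos hq0 x) (rpow_lt_one hq0.le hq1 hx) hvt)
end
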